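/- (Improved linkage construction.) Let q be a prime power, d an even integer with 2 ≤ d ≤ 2k, and Δ an integer with k ≤ Δ ≤ n − k. If there exist an (n−Δ, N_1, d, k)_q constant dimension code and a (Δ + k − d/2, N_2, d, k)_q constant dimension code, then there exists an (n, q^{Δ(k−d/2+1)}·N_1 + N_2, d, k)_q constant dimension code; that is, A_q(n,d;k) ≥ q^{Δ(k−d/2+1)}·A_q(n−Δ,d;k) + A_q(Δ+k−d/2,d;k). -/

import Mathlib

/-- Subspace distance `d_S(U,W) = dim U + dim W - 2 dim (U ∩ W)`. -/
noncomputable def subspaceDist (F : Type*) [Field F] {n : ℕ}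
    (U W : Submodule F (Fin n → F)) : ℕ :=
  Module.finrank F ↥U + Module.finrank F ↥W - 2 * Module.finrank F ↥(U ⊓ W)

/-!
Write `F^n ≅ F^(n-Δ) × K` with `K/F` of degree `Δ`. A codeword `U` of the first code is lifted to
the graphs over `U` of the maps `x ↦ L_a (τ_U x)`, where `τ_U` embeds `U` into `K` and
`L_a x = ∑_{j ≤ k - d/2} a_j x ^ q ^ j` runs over the `q ^ (Δ (k - d/2 + 1))` linearized
polynomials of `q`-degree at most `k - d/2` (a Gabidulin code). Two lifts of the same `U` meet
inside `ker L_(a-b)`, whose `q ^ dim` elements are roots of a nonzero polynomial of degree at most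
`q ^ (k - d/2)`; lifts of different codewords meet at most in `U ⊓ U'`. The second code is placed
inside `R × K` with `dim R = k - d/2`, so it meets each graph in dimension at most `k - d/2`.
Every intersection thus has dimension at most `k - d/2`, i.e. all distances are at least `d`.
-/

open Module Polynomial Finset

section LinearAlgebra

variable {F V W : Type*} [DivisionRing F] [AddCommGroup V] [Module F V]
  [AddCommGroup W] [Module F W]

theorem Submodule.finrank_map_of_injOn {f : V →ₗ[F] W} {U : Submodule F V}
    (hf : Set.InjOn f U) : finrank F (U.map f) = finrank F U := by
  rw [← LinearMap.range_domRestrict]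
  exact LinearMap.finrank_range_of_inj fun x y h => Subtype.ext (hf x.2 y.2 h)

theorem finrank_map_id_prod (U : Submodule F V) (f : V →ₗ[F] W) :
    finrank F (U.map (LinearMap.id.prod f)) = finrank F U :=
  Submodule.finrank_map_of_injOn fun _ _ _ _ h => congrArg Prod.fst h

theorem map_id_prod_inf_map_id_prod (U U' : Submodule F V) (f g : V →ₗ[F] W) :
    U.map (LinearMap.id.prod f) ⊓ U'.map (LinearMap.id.prod g) =
      (U ⊓ U' ⊓ LinearMap.ker (f - g)).map (LinearMap.id.prod f) := by
  ext ⟨x, y⟩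
  simp only [Submodule.mem_inf, Submodule.mem_map, LinearMap.prod_apply, LinearMap.id_apply,
    Prod.mk.injEq, LinearMap.mem_ker, LinearMap.sub_apply, sub_eq_zero, Function.prod]
  constructor
  · rintro ⟨⟨_, hx, rfl, rfl⟩, ⟨_, hx', rfl, h⟩⟩
    exact ⟨_, ⟨⟨hx, hx'⟩, h.symm⟩, rfl, rfl⟩
  · rintro ⟨_, ⟨⟨hx, hx'⟩, h⟩, rfl, rfl⟩
    exact ⟨⟨_, hx, rfl, rfl⟩, ⟨_, hx', rfl, h.symm⟩⟩

theorem finrank_map_id_prod_inf_le [FiniteDimensional F V] [FiniteDimensional F W]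
    (U : Submodule F V) (f : V →ₗ[F] W) {R : Submodule F V} {X : Submodule F (V × W)}
    (hX : X ≤ R.prod ⊤) : finrank F ↥(U.map (LinearMap.id.prod f) ⊓ X) ≤ finrank F R := by
  rw [← finrank_map_id_prod R f]
  refine Submodule.finrank_mono ?_
  rintro _ ⟨⟨x, -, rfl⟩, hxX⟩
  exact ⟨x, (hX hxX).1, rfl⟩

theorem finrank_map_id_prod_inf_map_id_prod_le [FiniteDimensional F V] (U U' : Submodule F V)
    (f g : V →ₗ[F] W) :
    finrank F ↥(U.map (LinearMap.id.prod f) ⊓ U'.map (LinearMap.id.prod g)) ≤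
      finrank F ↥(U ⊓ U') := by
  rw [map_id_prod_inf_map_id_prod, finrank_map_id_prod]
  exact Submodule.finrank_mono inf_le_left

theorem finrank_map_id_prod_inf_map_id_prod_self (U : Submodule F V) (f g : V →ₗ[F] W) :
    finrank F ↥(U.map (LinearMap.id.prod f) ⊓ U.map (LinearMap.id.prod g)) =
      finrank F ↥(U ⊓ LinearMap.ker (f - g)) := by
  rw [map_id_prod_inf_map_id_prod, finrank_map_id_prod, inf_idem]

theorem exists_linearMap_injective_of_finrank_le [FiniteDimensional F V] [FiniteDimensional F W]
    (h : finrank F V ≤ finrank F W) : ∃ f : V →ₗ[F] W, Function.Injective f := by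
  let b := Module.finBasis F V
  let c := Module.finBasis F W
  exact ⟨b.constr ℕ (c ∘ Fin.castLE h),
    b.injective_constr_of_linearIndependent (c.linearIndependent.comp _ (Fin.castLE_injective h))⟩

theorem exists_linearMap_injOn [FiniteDimensional F V] [FiniteDimensional F W] (U : Submodule F V)
    (h : finrank F U ≤ finrank F W) : ∃ f : V →ₗ[F] W, Set.InjOn f U := by
  obtain ⟨g, hg⟩ := exists_linearMap_injective_of_finrank_le h
  obtain ⟨f, hf⟩ := LinearMap.exists_extend g
  refine ⟨f, fun x hx y hy hxy => ?_⟩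
  have : g ⟨x, hx⟩ = g ⟨y, hy⟩ := by simpa [← hf] using hxy
  exact congrArg Subtype.val (hg this)

theorem exists_injective_fst_mem {V₁ V₂ : Type*} [AddCommGroup V₁] [Module F V₁]
    [AddCommGroup V₂] [Module F V₂] [FiniteDimensional F V₁] [FiniteDimensional F V₂]
    [FiniteDimensional F W] {t : ℕ} (ht : t ≤ finrank F V₁) (hW : finrank F W = t + finrank F V₂) :
    ∃ (R : Submodule F V₁) (ι : W →ₗ[F] V₁ × V₂),
      finrank F R = t ∧ Function.Injective ι ∧ ∀ x, (ι x).1 ∈ R := by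
  obtain ⟨j, hj⟩ :=
    exists_linearMap_injective_of_finrank_le (F := F) (V := Fin t → F) (W := V₁) (by simpa)
  obtain ⟨e⟩ : Nonempty (W ≃ₗ[F] (Fin t → F) × V₂) :=
    FiniteDimensional.nonempty_linearEquiv_of_finrank_eq (by simp [hW])
  refine ⟨LinearMap.range j, j.prodMap LinearMap.id ∘ₗ e.toLinearMap, ?_, ?_, fun x => ⟨_, rfl⟩⟩
  · rw [LinearMap.finrank_range_of_inj hj, finrank_fin_fun]
  · exact (Prod.map_injective.mpr ⟨hj, Function.injective_id⟩).comp e.injective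

end LinearAlgebra

section Linearized

variable (F : Type*) {K : Type*} [Field F] [Fintype F] [Field K] [Algebra F K]

noncomputable def linearizedMap {r : ℕ} (a : Fin r → K) : K →ₗ[F] K :=
  ∑ j, a j • ((FiniteField.frobeniusAlgHom F K) ^ (j : ℕ)).toLinearMap

theorem linearizedMap_apply {r : ℕ} (a : Fin r → K) (x : K) :
    linearizedMap F a x = ∑ j, a j * x ^ Fintype.card F ^ (j : ℕ) := by
  simp [linearizedMap, FiniteField.coe_frobeniusAlgHom, pow_iterate]

theorem linearizedMap_sub {r : ℕ} (a b : Fin r → K) :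
    linearizedMap F (a - b) = linearizedMap F a - linearizedMap F b := by
  ext x
  simp [linearizedMap_apply, sub_mul, Finset.sum_sub_distrib]

theorem finrank_ker_linearizedMap_le [Finite K] {r : ℕ} {a : Fin r → K} (ha : a ≠ 0) :
    finrank F (LinearMap.ker (linearizedMap F a)) ≤ r - 1 := by
  set q := Fintype.card F
  have hq : 1 < q := Fintype.one_lt_card
  let P : K[X] := ∑ j, C (a j) * X ^ q ^ (j : ℕ)
  obtain ⟨j₀, hj₀⟩ := Function.ne_iff.mp ha
  have hP : P ≠ 0 := by
    intro h
    apply hj₀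
    have := congrArg (coeff · (q ^ (j₀ : ℕ))) h
    simpa [P, finsetSum_coeff, coeff_C_mul_X_pow, (Nat.pow_right_injective hq).eq_iff,
      Fin.val_inj] using this
  have hdeg : P.natDegree ≤ q ^ (r - 1) :=
    natDegree_sum_le_of_forall_le _ _ fun j _ =>
      (natDegree_C_mul_X_pow_le _ _).trans (Nat.pow_le_pow_right hq.le (by omega))
  have hker : (LinearMap.ker (linearizedMap F a) : Set K) ⊆ P.rootSet K := fun x hx => by
    rw [mem_rootSet]
    refine ⟨hP, ?_⟩
    simpa [P, linearizedMap_apply] using hx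
  have : q ^ finrank F (LinearMap.ker (linearizedMap F a)) ≤ q ^ (r - 1) :=
    calc q ^ finrank F (LinearMap.ker (linearizedMap F a))
        = (LinearMap.ker (linearizedMap F a) : Set K).ncard := by
          rw [← Nat.card_coe_set_eq, natCard_eq_pow_finrank (K := F), Nat.card_eq_fintype_card]; rfl
      _ ≤ (P.rootSet K).ncard := Set.ncard_le_ncard hker
      _ ≤ P.natDegree := ncard_rootSet_le _ _
      _ ≤ q ^ (r - 1) := hdeg
  exact (Nat.pow_le_pow_iff_right hq).mp this

theorem exists_linearMaps_finrank_inf_ker_sub_le [Finite K] {V : Type*} [AddCommGroup V]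
    [Module F V] [FiniteDimensional F V] (U : Submodule F V) (hU : finrank F U ≤ finrank F K)
    (t : ℕ) : ∃ φ : (Fin (t + 1) → K) → V →ₗ[F] K,
      ∀ a b, a ≠ b → finrank F ↥(U ⊓ LinearMap.ker (φ a - φ b)) ≤ t := by
  have : FiniteDimensional F K := .of_finite
  obtain ⟨τ, hτ⟩ := exists_linearMap_injOn U hU
  refine ⟨fun a => linearizedMap F a ∘ₗ τ, fun a b hab => ?_⟩
  rw [← LinearMap.sub_comp, ← linearizedMap_sub]
  calc finrank F ↥(U ⊓ LinearMap.ker (linearizedMap F (a - b) ∘ₗ τ))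
      = finrank F ↥((U ⊓ LinearMap.ker (linearizedMap F (a - b) ∘ₗ τ)).map τ) :=
        (Submodule.finrank_map_of_injOn (hτ.mono inf_le_left)).symm
    _ ≤ finrank F (LinearMap.ker (linearizedMap F (a - b))) := by
        refine Submodule.finrank_mono ?_
        rintro _ ⟨x, hx, rfl⟩
        exact hx.2
    _ ≤ t := finrank_ker_linearizedMap_le F (sub_ne_zero.mpr hab)

end Linearized

section Code

variable {F V W : Type*} [DivisionRing F] [AddCommGroup V] [Module F V]
  [AddCommGroup W] [Module F W]

/-- A constant dimension code of minimum subspace distance at least `2 * (k - t)`, described by the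
bound `t` on the dimension of pairwise intersections. -/
def IsConstDimCode (C : Finset (Submodule F V)) (k t : ℕ) : Prop :=
  (∀ U ∈ C, finrank F U = k) ∧ ∀ U ∈ C, ∀ U' ∈ C, U ≠ U' → finrank F ↥(U ⊓ U') ≤ t

theorem isConstDimCode_image {ι : Type*} {s : Finset ι} {f : ι → Submodule F V} {k t : ℕ}
    (hf : ∀ i ∈ s, finrank F (f i) = k)
    (hft : ∀ i ∈ s, ∀ j ∈ s, i ≠ j → finrank F ↥(f i ⊓ f j) ≤ t) (htk : t < k) :
    IsConstDimCode (s.image f) k t ∧ #(s.image f) = #s := by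
  refine ⟨⟨forall_mem_image.mpr hf, ?_⟩, card_image_of_injOn fun i hi j hj hij => ?_⟩
  · simp only [forall_mem_image]
    exact fun i hi j hj hne => hft i hi j hj (ne_of_apply_ne f hne)
  · by_contra hne
    have := hft i hi j hj hne
    rw [← show f i = f j from hij, inf_idem, hf i hi] at this
    omega

theorem IsConstDimCode.image_map {C : Finset (Submodule F V)} {k t : ℕ}
    (hC : IsConstDimCode C k t) {f : V →ₗ[F] W} (hf : Function.Injective f) :
    IsConstDimCode (C.image (Submodule.map f)) k t ∧ #(C.image (Submodule.map f)) = #C := by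
  refine ⟨⟨forall_mem_image.mpr fun U hU => ?_, forall_mem_image.mpr fun U hU => ?_⟩,
    card_image_of_injective _ (Submodule.map_injective_of_injective hf)⟩
  · rw [Submodule.finrank_map_of_injOn hf.injOn, hC.1 U hU]
  · refine forall_mem_image.mpr fun U' hU' hne => ?_
    rw [← Submodule.map_inf f hf, Submodule.finrank_map_of_injOn hf.injOn]
    exact hC.2 U hU U' hU' (ne_of_apply_ne _ hne)

end Code

theorem IsConstDimCode.exists_linkage {F V₁ V₂ W : Type*} [DivisionRing F]
    [AddCommGroup V₁] [Module F V₁] [AddCommGroup V₂] [Module F V₂] [AddCommGroup W] [Module F W]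
    [FiniteDimensional F V₁] [FiniteDimensional F V₂] [FiniteDimensional F W]
    {C₁ : Finset (Submodule F V₁)} {C₂ : Finset (Submodule F W)} {k t : ℕ}
    (hC₁ : IsConstDimCode C₁ k t) (hC₂ : IsConstDimCode C₂ k t) (htk : t < k)
    (ht : t ≤ finrank F V₁) (hW : finrank F W = t + finrank F V₂) {ι : Type*} [Fintype ι]
    (hφ : ∀ U ∈ C₁, ∃ φ : ι → V₁ →ₗ[F] V₂,
      ∀ i j, i ≠ j → finrank F ↥(U ⊓ LinearMap.ker (φ i - φ j)) ≤ t) :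
    ∃ C : Finset (Submodule F (V₁ × V₂)),
      IsConstDimCode C k t ∧ #C = #C₁ * Nat.card ι + #C₂ := by
  choose! φ hφ using hφ
  obtain ⟨R, ι₂, hR, hι₂, hι₂R⟩ := exists_injective_fst_mem (V₂ := V₂) ht hW
  let g : (Submodule F V₁ × ι) ⊕ Submodule F W → Submodule F (V₁ × V₂)
    | .inl (U, i) => U.map (LinearMap.id.prod (φ U i))
    | .inr X => X.map ι₂
  have hcross (U : Submodule F V₁) (i : ι) (X : Submodule F W) :
      finrank F ↥(g (.inl (U, i)) ⊓ g (.inr X)) ≤ t :=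
    hR ▸ finrank_map_id_prod_inf_le U (φ U i) fun _ ⟨x, _, hx⟩ => hx ▸ ⟨hι₂R x, trivial⟩
  let s := (C₁ ×ˢ (univ : Finset ι)).disjSum C₂
  have hdim : ∀ x ∈ s, finrank F (g x) = k := by
    rintro (⟨U, i⟩ | X) hx <;>
      simp only [s, inl_mem_disjSum, inr_mem_disjSum, mem_product, mem_univ, and_true] at hx
    · exact (finrank_map_id_prod U _).trans (hC₁.1 U hx)
    · exact (Submodule.finrank_map_of_injOn hι₂.injOn).trans (hC₂.1 X hx)
  have hpair : ∀ x ∈ s, ∀ y ∈ s, x ≠ y → finrank F ↥(g x ⊓ g y) ≤ t := by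
    rintro (⟨U, i⟩ | X) hx (⟨U', i'⟩ | X') hx' hne <;>
      simp only [s, inl_mem_disjSum, inr_mem_disjSum, mem_product, mem_univ, and_true] at hx hx'
    · by_cases hUU' : U = U'
      · subst hUU'
        exact (finrank_map_id_prod_inf_map_id_prod_self U _ _).trans_le
          (hφ U hx i i' fun h => hne (h ▸ rfl))
      · exact (finrank_map_id_prod_inf_map_id_prod_le U U' _ _).trans (hC₁.2 U hx U' hx' hUU')
    · exact hcross U i X'
    · rw [inf_comm]
      exact hcross U' i' X
    · change finrank F ↥(X.map ι₂ ⊓ X'.map ι₂) ≤ t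
      rw [← Submodule.map_inf ι₂ hι₂, Submodule.finrank_map_of_injOn hι₂.injOn]
      exact hC₂.2 X hx X' hx' fun h => hne (h ▸ rfl)
  obtain ⟨hC, hcard⟩ := isConstDimCode_image hdim hpair htk
  refine ⟨_, hC, ?_⟩
  rw [hcard, card_disjSum, card_product, card_univ, Nat.card_eq_fintype_card]

theorem isConstDimCode_iff_le_subspaceDist {F : Type*} [Field F] {n k d : ℕ}
    (C : Finset (Submodule F (Fin n → F))) (hde : Even d) (hdk : d ≤ 2 * k) :
    IsConstDimCode C k (k - d / 2) ↔
      (∀ U ∈ C, finrank F U = k) ∧ ∀ U ∈ C, ∀ W ∈ C, U ≠ W → d ≤ subspaceDist F U W := by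
  refine and_congr_right fun hk =>
    forall₂_congr fun U hU => forall₂_congr fun W hW => imp_congr_right fun _ => ?_
  have : finrank F ↥(U ⊓ W) ≤ k := hk U hU ▸ Submodule.finrank_mono inf_le_left
  obtain ⟨δ, rfl⟩ := hde
  unfold subspaceDist
  rw [hk U hU, hk W hW]
  omega

theorem statement17_general (q n k d Δ N₁ N₂ : ℕ)
    (hd : 2 ≤ d) (hdk : d ≤ 2 * k) (hde : Even d)
    (hkΔ : k ≤ Δ) (hΔn : Δ ≤ n - k)
    (F : Type*) [Field F] [Fintype F] (hF : Fintype.card F = q)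
    (h₁ : ∃ C : Finset (Submodule F (Fin (n - Δ) → F)),
      C.card = N₁ ∧
      (∀ U ∈ C, Module.finrank F ↥U = k) ∧
      (∀ U ∈ C, ∀ W ∈ C, U ≠ W → d ≤ subspaceDist F U W))
    (h₂ : ∃ C : Finset (Submodule F (Fin (Δ + k - d / 2) → F)),
      C.card = N₂ ∧
      (∀ U ∈ C, Module.finrank F ↥U = k) ∧
      (∀ U ∈ C, ∀ W ∈ C, U ≠ W → d ≤ subspaceDist F U W)) :
    ∃ C : Finset (Submodule F (Fin n → F)),
      C.card = q ^ (Δ * (k - d / 2 + 1)) * N₁ + N₂ ∧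
      (∀ U ∈ C, Module.finrank F ↥U = k) ∧
      (∀ U ∈ C, ∀ W ∈ C, U ≠ W → d ≤ subspaceDist F U W) := by
  obtain ⟨C₁, rfl, hC₁⟩ := h₁
  obtain ⟨C₂, rfl, hC₂⟩ := h₂
  rw [← isConstDimCode_iff_le_subspaceDist _ hde hdk] at hC₁ hC₂
  have : Fact (ringChar F).Prime := ⟨CharP.char_is_prime F _⟩
  have : NeZero Δ := ⟨by omega⟩
  let K := FiniteField.Extension F (ringChar F) Δ
  have hK : finrank F K = Δ := FiniteField.finrank_extension F _ Δ
  have : Fintype K := Fintype.ofFinite K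
  obtain ⟨C, hC, hcard⟩ := hC₁.exists_linkage (V₂ := K) hC₂ (by omega) (by simp; omega)
    (by simp [hK]; omega) fun U hU =>
      exists_linearMaps_finrank_inf_ker_sub_le F U (by rw [hC₁.1 U hU, hK]; exact hkΔ) _
  obtain ⟨E⟩ : Nonempty (((Fin (n - Δ) → F) × K) ≃ₗ[F] (Fin n → F)) :=
    FiniteDimensional.nonempty_linearEquiv_of_finrank_eq (by simp [hK]; omega)
  obtain ⟨hCE, hcardE⟩ := hC.image_map E.injective
  refine ⟨_, ?_, (isConstDimCode_iff_le_subspaceDist _ hde hdk).mp hCE⟩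
  rw [hcardE, hcard, Nat.card_fun, FiniteField.natCard_extension, Nat.card_eq_fintype_card, hF,
    Nat.card_fin, ← pow_mul, mul_comm]

theorem statement17 (q n k d Δ N₁ N₂ : ℕ) (hq : IsPrimePow q)
    (hd : 2 ≤ d) (hdk : d ≤ 2 * k) (hde : Even d)
    (hkΔ : k ≤ Δ) (hΔn : Δ ≤ n - k)
    (F : Type*) [Field F] [Fintype F] (hF : Fintype.card F = q)
    (h₁ : ∃ C : Finset (Submodule F (Fin (n - Δ) → F)),
      C.card = N₁ ∧
      (∀ U ∈ C, Module.finrank F ↥U = k) ∧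
      (∀ U ∈ C, ∀ W ∈ C, U ≠ W → d ≤ subspaceDist F U W))
    (h₂ : ∃ C : Finset (Submodule F (Fin (Δ + k - d / 2) → F)),
      C.card = N₂ ∧
      (∀ U ∈ C, Module.finrank F ↥U = k) ∧
      (∀ U ∈ C, ∀ W ∈ C, U ≠ W → d ≤ subspaceDist F U W)) :
    ∃ C : Finset (Submodule F (Fin n → F)),
      C.card = q ^ (Δ * (k - d / 2 + 1)) * N₁ + N₂ ∧
      (∀ U ∈ C, Module.finrank F ↥U = k) ∧
      (∀ U ∈ C, ∀ W ∈ C, U ≠ W → d ≤ subspaceDist F U W) :=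
  statement17_general q n k d Δ N₁ N₂ hd hdk hde hkΔ hΔn F hF h₁ h₂
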